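/- arXiv:1601.03683 — 5 statements merged into one kernel-verified Lean document; each statement's English description precedes it below -/
import Mathlib

section
/- Let n ≥ 3 and let G = ℤ/nℤ. If n = p^α is a prime power, then the complement of the proper power graph of G has exactly n − 1 connected components (all vertices are isolated). If n has at least two distinct prime divisors, then the complement of the proper power graph of G has exactly φ(n) + 1 connected components, where φ is Euler's totient function. -/
/-!
In a finite cyclic group, `x` is a power of `y` iff `orderOf x ∣ orderOf y`, so two vertices are
adjacent iff their orders are incomparable under divisibility. Generators are isolated, and if
`|G| = p ^ α` any two orders are comparable, so every vertex is isolated.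

If two distinct primes divide `n = |G|`, take as hubs the elements whose order is the full
`r`-part `ordProj[r] n` of `n` for a prime `r ∣ n`. Hubs for different primes are adjacent, since
their orders are coprime and both exceed `1`. A non-generator `x ≠ 1` has `v_r(orderOf x) < v_r(n)`
for some prime `r`, so it is adjacent to an `r`-hub unless `orderOf x` is a power of `r`, in which
case it is adjacent to a hub of another prime. Hence the non-generators form a single component and
the `φ(n)` generators make up the others.
-/

open SimpleGraph

/-- The complement of the proper power graph of a finite group `G`: vertices are the
non-identity elements of `G`, and two vertices are adjacent iff neither is a power
of the other. -/
def propPowerCompl (G : Type*) [Group G] : SimpleGraph {g : G // g ≠ 1} where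
  Adj u v := (u : G) ∉ Subgroup.zpowers (v : G) ∧ (v : G) ∉ Subgroup.zpowers (u : G)
  symm := ⟨fun u v h => ⟨h.2, h.1⟩⟩
  loopless := ⟨fun u h => h.1 (Subgroup.mem_zpowers _)⟩

theorem Nat.card_subtype_ne {α : Type*} [Finite α] (a : α) :
    Nat.card {x : α // x ≠ a} = Nat.card α - 1 := by
  have := Fintype.ofFinite α
  classical
  rw [Nat.card_eq_fintype_card, Nat.card_eq_fintype_card]
  exact Set.card_ne_eq a

namespace SimpleGraph

variable {V : Type*} {G : SimpleGraph V}

theorem Reachable.eq_of_forall_not_adj {v w : V} (h : G.Reachable v w) (hv : ∀ u, ¬G.Adj v u) :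
    v = w := by
  obtain ⟨_ | ⟨hadj, _⟩⟩ := h
  · rfl
  · exact absurd hadj (hv _)

theorem card_connectedComponent_of_forall_not_adj (h : ∀ v w, ¬G.Adj v w) :
    Nat.card G.ConnectedComponent = Nat.card V :=
  (Nat.card_eq_of_bijective G.connectedComponentMk
    ⟨fun _ _ hvw => (ConnectedComponent.exact hvw).eq_of_forall_not_adj (h _),
      fun c => c.exists_rep⟩).symm

theorem card_connectedComponent_eq_card_isolated_add_one [Finite V] (P : V → Prop)
    (hiso : ∀ v w, P v → ¬G.Adj v w) (hconn : ∀ v w, ¬P v → ¬P w → G.Reachable v w)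
    {v₀ : V} (hv₀ : ¬P v₀) :
    Nat.card G.ConnectedComponent = Nat.card {v // P v} + 1 := by
  classical
  let f : Option {v // P v} → G.ConnectedComponent :=
    fun o => G.connectedComponentMk (o.elim v₀ Subtype.val)
  have hf : Function.Bijective f := by
    refine ⟨?_, fun c => ?_⟩
    · rintro (_ | ⟨v, hv⟩) (_ | ⟨w, hw⟩) hvw <;> replace hvw := ConnectedComponent.exact hvw
      · rfl
      · have hwv : w = v₀ := hvw.symm.eq_of_forall_not_adj (hiso w · hw)
        exact (hv₀ (hwv ▸ hw)).elim
      · have hvv : v = v₀ := hvw.eq_of_forall_not_adj (hiso v · hv)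
        exact (hv₀ (hvv ▸ hv)).elim
      · exact congrArg some (Subtype.ext (hvw.eq_of_forall_not_adj (hiso v · hv)))
    · obtain ⟨v, rfl⟩ := c.exists_rep
      by_cases hv : P v
      · exact ⟨some ⟨v, hv⟩, rfl⟩
      · exact ⟨none, ConnectedComponent.sound (hconn v₀ v hv₀ hv)⟩
  rw [← Nat.card_eq_of_bijective f hf, Finite.card_option]

end SimpleGraph

namespace Nat

theorem Coprime.not_dvd_of_one_lt {a b : ℕ} (h : Coprime a b) (ha : 1 < a) : ¬a ∣ b :=
  fun hab => ha.ne' (h.eq_one_of_dvd hab)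

theorem one_lt_ordProj {n r : ℕ} (hr : r.Prime) (hn : n ≠ 0) (hrn : r ∣ n) : 1 < ordProj[r] n :=
  one_lt_pow (hr.factorization_pos_of_dvd hn hrn).ne' hr.one_lt

theorem coprime_ordProj_ordProj {r s : ℕ} (hr : r.Prime) (hs : s.Prime) (hrs : r ≠ s) (n m : ℕ) :
    Coprime (ordProj[r] n) (ordProj[s] m) :=
  ((coprime_primes hr hs).2 hrs).pow _ _

theorem exists_prime_dvd_ne {n p q : ℕ} (hp : p.Prime) (hq : q.Prime) (hpq : p ≠ q)
    (hpn : p ∣ n) (hqn : q ∣ n) (r : ℕ) : ∃ s, s.Prime ∧ s ∣ n ∧ s ≠ r := by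
  rcases eq_or_ne p r with rfl | hpr
  · exact ⟨q, hq, hqn, hpq.symm⟩
  · exact ⟨p, hp, hpn, hpr⟩

theorem exists_prime_ordProj_incomparable {n d : ℕ} (hn : n ≠ 0)
    (hprimes : ∀ r, ∃ s, s.Prime ∧ s ∣ n ∧ s ≠ r) (hdn : d ∣ n) (hd1 : d ≠ 1) (hd : d ≠ n) :
    ∃ r, r.Prime ∧ r ∣ n ∧ ¬ordProj[r] n ∣ d ∧ ¬d ∣ ordProj[r] n := by
  have hd0 : d ≠ 0 := by rintro rfl; exact hn (zero_dvd_iff.mp hdn)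
  obtain ⟨r, hr⟩ : ∃ r, d.factorization r < n.factorization r := by
    by_contra! h
    exact hd (dvd_antisymm hdn ((factorization_le_iff_dvd hn hd0).mp (Finsupp.le_def.mpr h)))
  have hrp : r.Prime := by
    by_contra h
    simp [factorization_eq_zero_of_not_prime _ h] at hr
  have hrd : ¬ordProj[r] n ∣ d := by
    rw [hrp.pow_dvd_iff_le_factorization hd0]
    omega
  by_cases hdr : d ∣ ordProj[r] n
  · obtain ⟨s, hs, hsn, hsr⟩ := hprimes r
    have hcop : Coprime d (ordProj[s] n) :=
      (coprime_ordProj_ordProj hrp hs hsr.symm n n).coprime_dvd_left hdr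
    exact ⟨s, hs, hsn, hcop.symm.not_dvd_of_one_lt (one_lt_ordProj hs hn hsn),
      hcop.not_dvd_of_one_lt (by omega)⟩
  · exact ⟨r, hrp, dvd_of_factorization_pos (by omega), hrd, hdr⟩

end Nat

theorem mem_zpowers_iff_orderOf_dvd_of_isCyclic {G : Type*} [CommGroup G] [IsCyclic G] [Finite G]
    {x y : G} : x ∈ Subgroup.zpowers y ↔ orderOf x ∣ orderOf y := by
  refine ⟨orderOf_dvd_of_mem_zpowers, fun h => ?_⟩
  have hle : Subgroup.zpowers y ≤ (powMonoidHom (orderOf y) : G →* G).ker :=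
    Subgroup.zpowers_le.mpr (pow_orderOf_eq_one y)
  have heq : Subgroup.zpowers y = (powMonoidHom (orderOf y) : G →* G).ker :=
    Subgroup.eq_of_le_of_card_ge hle <| by
      rw [IsCyclic.card_powMonoidHom_ker, Nat.card_zpowers,
        Nat.gcd_eq_right (orderOf_dvd_natCard y)]
  rw [heq]
  exact orderOf_dvd_iff_pow_eq_one.mp h

theorem IsCyclic.card_orderOf_eq_natCard (G : Type*) [Group G] [IsCyclic G] [Finite G] :
    Nat.card {g : G // orderOf g = Nat.card G} = (Nat.card G).totient := by
  have := Fintype.ofFinite G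
  classical
  rw [Nat.card_eq_fintype_card, Fintype.card_subtype, Nat.card_eq_fintype_card]
  exact IsCyclic.card_orderOf_eq_totient dvd_rfl

namespace propPowerCompl

variable {G : Type*} [CommGroup G] [IsCyclic G] [Finite G]

theorem adj_iff {x y : {g : G // g ≠ 1}} :
    (propPowerCompl G).Adj x y ↔
      ¬orderOf (x : G) ∣ orderOf (y : G) ∧ ¬orderOf (y : G) ∣ orderOf (x : G) := by
  show (x : G) ∉ _ ∧ (y : G) ∉ _ ↔ _
  rw [mem_zpowers_iff_orderOf_dvd_of_isCyclic, mem_zpowers_iff_orderOf_dvd_of_isCyclic]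

theorem not_adj_of_orderOf_eq_card {x : {g : G // g ≠ 1}} (hx : orderOf (x : G) = Nat.card G)
    (y : {g : G // g ≠ 1}) : ¬(propPowerCompl G).Adj x y := by
  rw [adj_iff, hx]
  exact fun h => h.2 (orderOf_dvd_natCard _)

theorem not_adj_of_card_eq_prime_pow {p α : ℕ} (hp : p.Prime) (hG : Nat.card G = p ^ α)
    (x y : {g : G // g ≠ 1}) : ¬(propPowerCompl G).Adj x y := by
  obtain ⟨i, -, hi⟩ := (Nat.dvd_prime_pow hp).mp (hG ▸ orderOf_dvd_natCard (x : G))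
  obtain ⟨j, -, hj⟩ := (Nat.dvd_prime_pow hp).mp (hG ▸ orderOf_dvd_natCard (y : G))
  rw [adj_iff, hi, hj]
  rintro ⟨hij, hji⟩
  rcases le_total i j with h | h
  · exact hij (pow_dvd_pow p h)
  · exact hji (pow_dvd_pow p h)

theorem exists_orderOf_eq_ordProj {r : ℕ} (hr : r.Prime) (hrn : r ∣ Nat.card G) :
    ∃ a : {g : G // g ≠ 1}, orderOf (a : G) = ordProj[r] (Nat.card G) := by
  obtain ⟨g, hg⟩ := hr.exists_orderOf_eq_pow_factorization_exponent G
  rw [IsCyclic.exponent_eq_card] at hg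
  have hg1 : g ≠ 1 := by
    rintro rfl
    exact (Nat.one_lt_ordProj hr Nat.card_pos.ne' hrn).ne (orderOf_one.symm.trans hg)
  exact ⟨⟨g, hg1⟩, hg⟩

theorem adj_of_orderOf_eq_ordProj {r s : ℕ} (hr : r.Prime) (hs : s.Prime) (hrs : r ≠ s)
    (hrn : r ∣ Nat.card G) (hsn : s ∣ Nat.card G) {a b : {g : G // g ≠ 1}}
    (ha : orderOf (a : G) = ordProj[r] (Nat.card G))
    (hb : orderOf (b : G) = ordProj[s] (Nat.card G)) : (propPowerCompl G).Adj a b := by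
  have hcop := Nat.coprime_ordProj_ordProj hr hs hrs (Nat.card G) (Nat.card G)
  rw [adj_iff, ha, hb]
  exact ⟨hcop.not_dvd_of_one_lt (Nat.one_lt_ordProj hr Nat.card_pos.ne' hrn),
    hcop.symm.not_dvd_of_one_lt (Nat.one_lt_ordProj hs Nat.card_pos.ne' hsn)⟩

theorem reachable_of_orderOf_eq_ordProj (hprimes : ∀ r, ∃ s, s.Prime ∧ s ∣ Nat.card G ∧ s ≠ r)
    {r s : ℕ} (hr : r.Prime) (hs : s.Prime) (hrn : r ∣ Nat.card G) (hsn : s ∣ Nat.card G)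
    {a b : {g : G // g ≠ 1}} (ha : orderOf (a : G) = ordProj[r] (Nat.card G))
    (hb : orderOf (b : G) = ordProj[s] (Nat.card G)) : (propPowerCompl G).Reachable a b := by
  rcases eq_or_ne r s with rfl | hrs
  · obtain ⟨t, ht, htn, htr⟩ := hprimes r
    obtain ⟨c, hc⟩ := exists_orderOf_eq_ordProj ht htn
    exact (adj_of_orderOf_eq_ordProj hr ht htr.symm hrn htn ha hc).reachable.trans
      (adj_of_orderOf_eq_ordProj ht hr htr htn hrn hc hb).reachable
  · exact (adj_of_orderOf_eq_ordProj hr hs hrs hrn hsn ha hb).reachable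

theorem exists_adj_orderOf_eq_ordProj (hprimes : ∀ r, ∃ s, s.Prime ∧ s ∣ Nat.card G ∧ s ≠ r)
    {x : {g : G // g ≠ 1}} (hx : orderOf (x : G) ≠ Nat.card G) :
    ∃ r, r.Prime ∧ r ∣ Nat.card G ∧
      ∃ a : {g : G // g ≠ 1}, orderOf (a : G) = ordProj[r] (Nat.card G) ∧
        (propPowerCompl G).Adj x a := by
  obtain ⟨r, hr, hrn, hrx, hxr⟩ := Nat.exists_prime_ordProj_incomparable Nat.card_pos.ne' hprimes
    (orderOf_dvd_natCard (x : G)) (orderOf_eq_one_iff.not.mpr x.2) hx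
  obtain ⟨a, ha⟩ := exists_orderOf_eq_ordProj hr hrn
  exact ⟨r, hr, hrn, a, ha, adj_iff.mpr (ha ▸ ⟨hxr, hrx⟩)⟩

theorem reachable_of_orderOf_ne_card (hprimes : ∀ r, ∃ s, s.Prime ∧ s ∣ Nat.card G ∧ s ≠ r)
    {x y : {g : G // g ≠ 1}} (hx : orderOf (x : G) ≠ Nat.card G)
    (hy : orderOf (y : G) ≠ Nat.card G) : (propPowerCompl G).Reachable x y := by
  obtain ⟨r, hr, hrn, a, ha, hxa⟩ := exists_adj_orderOf_eq_ordProj hprimes hx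
  obtain ⟨s, hs, hsn, b, hb, hyb⟩ := exists_adj_orderOf_eq_ordProj hprimes hy
  exact hxa.reachable.trans
    ((reachable_of_orderOf_eq_ordProj hprimes hr hs hrn hsn ha hb).trans hyb.reachable.symm)

theorem card_connectedComponent_of_card_eq_prime_pow {p α : ℕ} (hp : p.Prime)
    (hG : Nat.card G = p ^ α) :
    Nat.card (propPowerCompl G).ConnectedComponent = Nat.card G - 1 := by
  rw [card_connectedComponent_of_forall_not_adj (not_adj_of_card_eq_prime_pow hp hG),
    Nat.card_subtype_ne]

theorem card_connectedComponent_eq_totient_add_one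
    (hprimes : ∀ r, ∃ s, s.Prime ∧ s ∣ Nat.card G ∧ s ≠ r) :
    Nat.card (propPowerCompl G).ConnectedComponent = (Nat.card G).totient + 1 := by
  obtain ⟨p, hp, hpn, -⟩ := hprimes 0
  obtain ⟨q, hq, hqn, hqp⟩ := hprimes p
  obtain ⟨a, ha⟩ := exists_orderOf_eq_ordProj hp hpn
  obtain ⟨b, hb⟩ := exists_orderOf_eq_ordProj hq hqn
  have hab : (propPowerCompl G).Adj a b := adj_of_orderOf_eq_ordProj hp hq hqp.symm hpn hqn ha hb
  have hG : 1 < Nat.card G := hp.one_lt.trans_le (Nat.le_of_dvd Nat.card_pos hpn)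
  have hgen_ne_one {g : G} (hg : orderOf g = Nat.card G) : g ≠ 1 := by
    rintro rfl
    rw [orderOf_one] at hg
    omega
  rw [card_connectedComponent_eq_card_isolated_add_one
      (fun v : {g : G // g ≠ 1} => orderOf (v : G) = Nat.card G)
      (fun _ w hv => not_adj_of_orderOf_eq_card hv w)
      (fun _ _ hv hw => reachable_of_orderOf_ne_card hprimes hv hw)
      (fun ha_gen => not_adj_of_orderOf_eq_card ha_gen b hab),
    Nat.card_congr (Equiv.subtypeSubtypeEquivSubtype hgen_ne_one),
    IsCyclic.card_orderOf_eq_natCard]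

end propPowerCompl

/-- For `n ≥ 3`, the complement of the proper power graph of `ℤ/nℤ` has `n − 1`
connected components when `n` is a prime power, and `φ(n) + 1` connected components
when `n` has at least two distinct prime divisors. -/
theorem propPowerCompl_zmod_card_connectedComponent (n : ℕ) (hn : 3 ≤ n) :
    ((∃ p α : ℕ, p.Prime ∧ 1 ≤ α ∧ n = p ^ α) →
      Nat.card (propPowerCompl (Multiplicative (ZMod n))).ConnectedComponent = n - 1) ∧
    ((∃ p q : ℕ, p.Prime ∧ q.Prime ∧ p ≠ q ∧ p ∣ n ∧ q ∣ n) →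
      Nat.card (propPowerCompl (Multiplicative (ZMod n))).ConnectedComponent =
        Nat.totient n + 1) := by
  have : NeZero n := ⟨by omega⟩
  have hcard : Nat.card (Multiplicative (ZMod n)) = n := by simp
  refine ⟨fun ⟨p, α, hp, _, hpα⟩ => ?_, fun ⟨p, q, hp, hq, hpq, hpn, hqn⟩ => ?_⟩
  · rw [propPowerCompl.card_connectedComponent_of_card_eq_prime_pow hp (hcard.trans hpα), hcard]
  · rw [propPowerCompl.card_connectedComponent_eq_totient_add_one
      (hcard.symm ▸ Nat.exists_prime_dvd_ne hp hq hpq hpn hqn), hcard]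
end

section
/- Let p and q be distinct primes. The complement of the proper power graph of the cyclic group ℤ/pqℤ is isomorphic to the disjoint union K_{p−1,q−1} ∪ K̄_{(p−1)(q−1)}: the p − 1 elements of order p and the q − 1 elements of order q form a complete bipartite graph K_{p−1,q−1}, and the (p−1)(q−1) generators of the group are isolated vertices. -/
/-!
In a finite cyclic group `a ∈ ⟨b⟩` iff `orderOf a ∣ orderOf b`, so adjacency in the complement
of the proper power graph depends only on the orders of the two vertices. In `ℤ/pqℤ` a
non-identity element has order `p`, `q` or `pq`, and two of these orders are incomparable under
divisibility exactly when they are `p` and `q`. The three classes have `φ p = p - 1`,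
`φ q = q - 1` and `φ (pq) = (p - 1)(q - 1)` elements.
-/

open SimpleGraph

/-- The disjoint union of two simple graphs. -/
def SimpleGraph.disjUnionGraph {V₁ V₂ : Type*} (G₁ : SimpleGraph V₁) (G₂ : SimpleGraph V₂) :
    SimpleGraph (V₁ ⊕ V₂) where
  Adj u v := match u, v with
    | Sum.inl a, Sum.inl b => G₁.Adj a b
    | Sum.inr a, Sum.inr b => G₂.Adj a b
    | _, _ => False
  symm := ⟨by rintro (a | a) (b | b) h <;> simp_all <;> exact h.symm⟩
  loopless := ⟨by rintro (a | a) h <;> simp_all⟩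

theorem IsCyclic.mem_zpowers_iff_orderOf_dvd {G : Type*} [Group G] [Fintype G] [IsCyclic G]
    {a b : G} : a ∈ Subgroup.zpowers b ↔ orderOf a ∣ orderOf b := by
  classical
  refine ⟨orderOf_dvd_of_mem_zpowers, fun hab => ?_⟩
  -- `zpowers b` already has `orderOf b` elements, and at most that many solve `x ^ orderOf b = 1`.
  set S := Finset.univ.filter fun x : G => x ^ orderOf b = 1
  set Z := Finset.univ.filter fun x : G => x ∈ Subgroup.zpowers b
  have hZS : Z ⊆ S := fun x hx => by
    simp only [S, Z, Finset.mem_filter, Finset.mem_univ, true_and] at hx ⊢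
    exact orderOf_dvd_iff_pow_eq_one.mp (orderOf_dvd_of_mem_zpowers hx)
  have hSZ : S.card ≤ Z.card := calc
    S.card ≤ orderOf b := IsCyclic.card_pow_eq_one_le (orderOf_pos b)
    _ = Z.card := by rw [← Fintype.card_zpowers, ← Fintype.card_subtype]
  have ha : a ∈ S := by simpa [S] using orderOf_dvd_iff_pow_eq_one.mp hab
  rw [← Finset.eq_of_subset_of_card_le hZS hSZ] at ha
  simpa [Z] using ha

theorem orderOf_eq_or_eq_or_eq_mul_of_card_eq_mul {G : Type*} [Group G] {p q : ℕ}
    (hp : p.Prime) (hq : q.Prime) (hG : Nat.card G = p * q) {g : G} (hg : g ≠ 1) :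
    orderOf g = p ∨ orderOf g = q ∨ orderOf g = p * q := by
  obtain ⟨a, b, ha, hb, hab⟩ := Nat.dvd_mul.mp (hG ▸ orderOf_dvd_natCard g)
  rcases (Nat.dvd_prime hp).mp ha with rfl | rfl <;>
    rcases (Nat.dvd_prime hq).mp hb with rfl | rfl
  · exact absurd (orderOf_eq_one_iff.mp (by simpa using hab.symm)) hg
  all_goals simp_all

theorem Nat.Prime.not_dvd_and_not_dvd_iff {p q a b : ℕ} (hp : p.Prime) (hq : q.Prime) (hpq : p ≠ q)
    (ha : a = p ∨ a = q ∨ a = p * q) (hb : b = p ∨ b = q ∨ b = p * q) :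
    ¬ a ∣ b ∧ ¬ b ∣ a ↔ a = p ∧ b = q ∨ a = q ∧ b = p := by
  have hpq' : ¬ p ∣ q := fun h => hpq ((Nat.prime_dvd_prime_iff_eq hp hq).mp h)
  have hqp' : ¬ q ∣ p := fun h => hpq ((Nat.prime_dvd_prime_iff_eq hq hp).mp h).symm
  have hp_lt : p < p * q := lt_mul_of_one_lt_right hp.pos hq.one_lt
  have hq_lt : q < p * q := lt_mul_of_one_lt_left hq.pos hp.one_lt
  have hpqp : ¬ p * q ∣ p := fun h => (Nat.le_of_dvd hp.pos h).not_gt hp_lt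
  have hpqq : ¬ p * q ∣ q := fun h => (Nat.le_of_dvd hq.pos h).not_gt hq_lt
  rcases ha with rfl | rfl | rfl <;> rcases hb with rfl | rfl | rfl <;>
    simp [hpq, hpq', hqp', hpqp, hpqq, hp_lt.ne', hq_lt.ne', Ne.symm hpq]

theorem propPowerCompl_adj_iff_of_isCyclic {G : Type*} [Group G] [Fintype G] [IsCyclic G]
    {u v : {g : G // g ≠ 1}} :
    (propPowerCompl G).Adj u v ↔
      ¬ orderOf (u : G) ∣ orderOf (v : G) ∧ ¬ orderOf (v : G) ∣ orderOf (u : G) := by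
  simp only [propPowerCompl, IsCyclic.mem_zpowers_iff_orderOf_dvd]

theorem IsCyclic.card_ne_one_orderOf_eq_totient {G : Type*} [Group G] [Finite G] [IsCyclic G]
    {d : ℕ} (hd : d ∣ Nat.card G) (hd1 : d ≠ 1) :
    Nat.card {v : {g : G // g ≠ 1} // orderOf (v : G) = d} = d.totient := by
  classical
  have := Fintype.ofFinite G
  have hne : ∀ {g : G}, orderOf g = d → g ≠ 1 := fun h h1 => hd1 (by simp [← h, h1])
  rw [Nat.card_congr (Equiv.subtypeSubtypeEquivSubtype hne), Nat.card_eq_fintype_card,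
    Fintype.card_subtype, IsCyclic.card_orderOf_eq_totient (hd.trans Nat.card_eq_fintype_card.dvd)]

theorem SimpleGraph.nonempty_iso_disjUnionGraph_of_adj_iff {V α β γ : Type*} (G : SimpleGraph V)
    (P Q : V → Prop) (hPQ : ∀ v, P v → ¬ Q v) (hadj : ∀ u v, G.Adj u v ↔ P u ∧ Q v ∨ Q u ∧ P v)
    (eP : {v // P v} ≃ α) (eQ : {v // Q v} ≃ β) (eR : {v // ¬ P v ∧ ¬ Q v} ≃ γ) :
    Nonempty (G ≃g (completeBipartiteGraph α β).disjUnionGraph (⊥ : SimpleGraph γ)) := by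
  classical
  let e : V ≃ ({v // P v} ⊕ {v // Q v}) ⊕ {v // ¬ P v ∧ ¬ Q v} :=
    { toFun := fun v =>
        if hP : P v then .inl (.inl ⟨v, hP⟩)
        else if hQ : Q v then .inl (.inr ⟨v, hQ⟩) else .inr ⟨v, hP, hQ⟩
      invFun := Sum.elim (Sum.elim Subtype.val Subtype.val) Subtype.val
      left_inv := fun v => by dsimp only; split_ifs <;> rfl
      right_inv := by
        rintro ((⟨v, hP⟩ | ⟨v, hQ⟩) | ⟨v, hP, hQ⟩)
        · simp [hP]
        · simp [hQ, show ¬ P v from fun hP => hPQ v hP hQ]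
        · simp [hP, hQ] }
  refine ⟨⟨e.trans (Equiv.sumCongr (Equiv.sumCongr eP eQ) eR), fun {u v} => ?_⟩⟩
  have trichotomy (w : V) : (P w ∧ ¬ Q w) ∨ (¬ P w ∧ Q w) ∨ (¬ P w ∧ ¬ Q w) := by
    by_cases hP : P w
    · exact .inl ⟨hP, hPQ w hP⟩
    · tauto
  rw [hadj]
  rcases trichotomy u with ⟨hPu, hQu⟩ | ⟨hPu, hQu⟩ | ⟨hPu, hQu⟩ <;>
    rcases trichotomy v with ⟨hPv, hQv⟩ | ⟨hPv, hQv⟩ | ⟨hPv, hQv⟩ <;>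
    simp [e, disjUnionGraph, hPu, hQu, hPv, hQv]

/-- For distinct primes `p` and `q`, the complement of the proper power graph of
`ℤ/pqℤ` is isomorphic to `K_{p−1,q−1} ∪ K̄_{(p−1)(q−1)}`: two vertices are adjacent
iff one has order `p` and the other has order `q` (so the elements of order `p` and
of order `q` form a complete bipartite graph and the `(p−1)(q−1)` generators are
isolated). -/
theorem propPowerCompl_zmod_pq (p q : ℕ) (hp : p.Prime) (hq : q.Prime) (hpq : p ≠ q) :
    (∀ u v : {g : Multiplicative (ZMod (p * q)) // g ≠ 1},
      (propPowerCompl (Multiplicative (ZMod (p * q)))).Adj u v ↔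
        ((orderOf (u : Multiplicative (ZMod (p * q))) = p ∧
            orderOf (v : Multiplicative (ZMod (p * q))) = q) ∨
          (orderOf (u : Multiplicative (ZMod (p * q))) = q ∧
            orderOf (v : Multiplicative (ZMod (p * q))) = p))) ∧
    Nonempty
      ((propPowerCompl (Multiplicative (ZMod (p * q)))) ≃g
        SimpleGraph.disjUnionGraph
          (completeBipartiteGraph (Fin (p - 1)) (Fin (q - 1)))
          (⊥ : SimpleGraph (Fin ((p - 1) * (q - 1))))) := by
  set G := Multiplicative (ZMod (p * q))
  have : NeZero (p * q) := ⟨mul_ne_zero hp.ne_zero hq.ne_zero⟩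
  have hcard : Nat.card G = p * q := by simp [G]
  have hp_lt : p < p * q := lt_mul_of_one_lt_right hp.pos hq.one_lt
  have hq_lt : q < p * q := lt_mul_of_one_lt_left hq.pos hp.one_lt
  have hord (v : {g : G // g ≠ 1}) := orderOf_eq_or_eq_or_eq_mul_of_card_eq_mul hp hq hcard v.2
  have hadj (u v : {g : G // g ≠ 1}) :=
    propPowerCompl_adj_iff_of_isCyclic.trans (hp.not_dvd_and_not_dvd_iff hq hpq (hord u) (hord v))
  have hgen (v : {g : G // g ≠ 1}) :
      ¬ orderOf (v : G) = p ∧ ¬ orderOf (v : G) = q ↔ orderOf (v : G) = p * q := by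
    rcases hord v with h | h | h <;> simp [h, hpq, hp_lt.ne, hq_lt.ne, hp_lt.ne', hq_lt.ne']
  refine ⟨hadj, SimpleGraph.nonempty_iso_disjUnionGraph_of_adj_iff _ _ _
    (fun v hvp hvq => hpq (hvp.symm.trans hvq)) hadj
    (Finite.equivFinOfCardEq ?_) (Finite.equivFinOfCardEq ?_) (Finite.equivFinOfCardEq ?_)⟩
  · rw [IsCyclic.card_ne_one_orderOf_eq_totient ((dvd_mul_right p q).trans hcard.symm.dvd)
      hp.ne_one, Nat.totient_prime hp]
  · rw [IsCyclic.card_ne_one_orderOf_eq_totient ((dvd_mul_left q p).trans hcard.symm.dvd)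
      hq.ne_one, Nat.totient_prime hq]
  · rw [Nat.card_congr (Equiv.subtypeEquivRight hgen),
      IsCyclic.card_ne_one_orderOf_eq_totient hcard.symm.dvd (hp.one_lt.trans hp_lt).ne',
      Nat.totient_mul ((Nat.coprime_primes hp hq).mpr hpq), Nat.totient_prime hp,
      Nat.totient_prime hq]
end

section
/- Let G be a finite group and n ≥ 3. The complement of the proper power graph of G is isomorphic to the cycle graph C_n if and only if n = 3 and G is isomorphic to ℤ/2ℤ × ℤ/2ℤ. -/
open SimpleGraph

/-!
If `g ^ 2 ≠ 1`, then `g` and `g⁻¹` are distinct vertices with the same neighbourhood, because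
they generate the same cyclic subgroup. Among cycles only `C₄` has two such vertices, and that
would force `|G| = 5`; but in a group of prime order every non-identity element generates the
group, so the graph has no edges. Hence every element squares to `1`, so `⟨g⟩ = {1, g}` and the
graph is complete. A complete cycle is `C₃`, so `|G| = 4` and `G` is a Klein four-group.
-/

theorem Nat.card_subtype_ne_add_one {α : Type*} [Finite α] (a : α) :
    Nat.card {x // x ≠ a} + 1 = Nat.card α := by
  classical
  rw [← Finite.card_option, Nat.card_congr (Equiv.optionSubtypeNe a)]

theorem IsKleinFour.of_card_of_forall_sq_eq_one {G : Type*} [Group G] (hcard : Nat.card G = 4)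
    (h : ∀ g : G, g ^ 2 = 1) : IsKleinFour G := by
  refine ⟨hcard, ?_⟩
  have : Finite G := Nat.finite_of_card_ne_zero (by omega)
  have : Nontrivial G := Finite.one_lt_card_iff_nontrivial.1 (by omega)
  exact (Monoid.exponent_eq_prime_iff Nat.prime_two).2 fun g hg => orderOf_eq_prime (h g) hg

theorem eq_of_mem_zpowers_of_sq_eq_one {G : Type*} [Group G] {u v : G} (hv : v ^ 2 = 1)
    (hu : u ≠ 1) (h : u ∈ Subgroup.zpowers v) : u = v := by
  obtain ⟨k, rfl⟩ := h
  rcases Int.even_or_odd' k with ⟨m, rfl | rfl⟩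
  · simp [zpow_mul, hv] at hu
  · simp [zpow_add, zpow_mul, hv]

namespace SimpleGraph

theorem Iso.eq_bot_iff {V W : Type*} {G : SimpleGraph V} {H : SimpleGraph W} (e : G ≃g H) :
    G = ⊥ ↔ H = ⊥ := by
  simp only [eq_bot_iff_forall_not_adj, ← e.symm.map_adj_iff, e.symm.surjective.forall]

theorem Iso.eq_top_iff {V W : Type*} {G : SimpleGraph V} {H : SimpleGraph W} (e : G ≃g H) :
    G = ⊤ ↔ H = ⊤ := by
  simp only [eq_top_iff_forall_ne_adj, ← e.symm.map_adj_iff, e.symm.surjective.forall, ne_eq,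
    e.symm.injective.eq_iff]

theorem cycleGraph_ne_bot {n : ℕ} (hn : 2 ≤ n) : cycleGraph n ≠ ⊥ := by
  obtain ⟨m, rfl⟩ := Nat.exists_eq_add_of_le' hn
  intro h
  simpa [h] using (cycleGraph_adj (u := 0) (v := 1) (n := m)).2 (by simp)

theorem cycleGraph_ne_top {n : ℕ} (hn : 4 ≤ n) : cycleGraph n ≠ ⊤ := by
  obtain ⟨m, rfl⟩ := Nat.exists_eq_add_of_le' hn
  have h02 : ¬(cycleGraph (m + 4)).Adj 0 2 := by
    rw [cycleGraph_adj', Fin.val_sub, Fin.val_sub]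
    simp [Nat.mod_eq_of_lt]
  exact fun h => h02 (h ▸ by simp [Fin.ext_iff, Nat.mod_eq_of_lt])

open Fin.CommRing in
theorem cycleGraph_eq_four_of_neighborSet_eq {n : ℕ} {a b : Fin n} (hab : a ≠ b)
    (h : (cycleGraph n).neighborSet a = (cycleGraph n).neighborSet b) : n = 4 := by
  obtain _ | _ | m := n
  · exact a.elim0
  · exact absurd (Subsingleton.elim (α := Fin 1) a b) hab
  have hsucc : a + 1 ∈ (cycleGraph (m + 2)).neighborSet b := h ▸ by simp [cycleGraph_neighborSet]
  have hpred : a - 1 ∈ (cycleGraph (m + 2)).neighborSet b := h ▸ by simp [cycleGraph_neighborSet]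
  simp only [cycleGraph_neighborSet, Set.mem_insert_iff, Set.mem_singleton_iff] at hsucc hpred
  have hb_add : b = a + 2 := by
    rcases hsucc with h | h
    · linear_combination -h
    · exact absurd (by linear_combination h) hab
  have hb_sub : b = a - 2 := by
    rcases hpred with h | h
    · exact absurd (by linear_combination h) hab
    · linear_combination -h
  have h4 : ((4 : ℕ) : Fin (m + 2)) = 0 := by
    push_cast
    linear_combination hb_sub - hb_add
  have : m + 2 ≤ 4 := Nat.le_of_dvd (by norm_num) (Fin.natCast_eq_zero.mp h4)
  obtain rfl | rfl | rfl : m = 0 ∨ m = 1 ∨ m = 2 := by omega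
  · exact absurd (hb_add.trans (by simp)) hab.symm
  · exact absurd (Fin.natCast_eq_zero.mp h4) (by norm_num)
  · rfl

end SimpleGraph

section propPowerCompl

variable {G : Type*} [Group G]

theorem propPowerCompl_neighborSet_eq_of_zpowers_eq {u v : {g : G // g ≠ 1}}
    (h : Subgroup.zpowers (u : G) = Subgroup.zpowers (v : G)) :
    (propPowerCompl G).neighborSet u = (propPowerCompl G).neighborSet v := by
  ext w
  simp only [mem_neighborSet, propPowerCompl, ← Subgroup.zpowers_le, h]

theorem propPowerCompl_eq_top_of_forall_sq_eq_one (h : ∀ g : G, g ^ 2 = 1) :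
    propPowerCompl G = ⊤ :=
  eq_top_iff_forall_ne_adj.2 fun u v huv =>
    ⟨fun hu => huv (Subtype.ext (eq_of_mem_zpowers_of_sq_eq_one (h v) u.2 hu)),
      fun hv => huv (Subtype.ext (eq_of_mem_zpowers_of_sq_eq_one (h u) v.2 hv)).symm⟩

theorem propPowerCompl_eq_bot_of_card_prime (hp : (Nat.card G).Prime) : propPowerCompl G = ⊥ :=
  have := Fact.mk hp
  eq_bot_iff_forall_not_adj.2 fun _ v huv => huv.1 (mem_zpowers_of_prime_card rfl v.2)

theorem card_eq_of_propPowerCompl_iso_cycleGraph [Finite G] {n : ℕ}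
    (e : propPowerCompl G ≃g cycleGraph n) : Nat.card G = n + 1 := by
  rw [← Nat.card_subtype_ne_add_one (1 : G), Nat.card_congr e.toEquiv, Nat.card_fin]

theorem sq_eq_one_of_propPowerCompl_iso_cycleGraph [Finite G] {n : ℕ}
    (e : propPowerCompl G ≃g cycleGraph n) (g : G) : g ^ 2 = 1 := by
  by_contra hg
  have hg₁ : g ≠ 1 := by rintro rfl; simp at hg
  have hg_inv : g⁻¹ ≠ g := fun h => hg (by rw [sq]; nth_rw 1 [← h]; exact inv_mul_cancel g)
  let u : {g : G // g ≠ 1} := ⟨g, hg₁⟩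
  let v : {g : G // g ≠ 1} := ⟨g⁻¹, inv_ne_one.2 hg₁⟩
  have hn : n = 4 := by
    refine cycleGraph_eq_four_of_neighborSet_eq (a := e v) (b := e u)
      (e.injective.ne (ne_of_apply_ne Subtype.val hg_inv)) ?_
    rw [← e.image_neighborSet, ← e.image_neighborSet,
      propPowerCompl_neighborSet_eq_of_zpowers_eq (u := v) (v := u) Subgroup.zpowers_inv]
  subst hn
  have hp : (Nat.card G).Prime := card_eq_of_propPowerCompl_iso_cycleGraph e ▸ Nat.prime_five
  exact cycleGraph_ne_bot (by norm_num) (e.eq_bot_iff.1 (propPowerCompl_eq_bot_of_card_prime hp))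

end propPowerCompl

/-- For a finite group `G` and `n ≥ 3`, the complement of the proper power graph of
`G` is isomorphic to the cycle `C_n` iff `n = 3` and `G ≅ ℤ/2ℤ × ℤ/2ℤ`. -/
theorem propPowerCompl_cycle_iff (G : Type*) [Group G] [Finite G] (n : ℕ)
    (hn : 3 ≤ n) :
    Nonempty ((propPowerCompl G) ≃g cycleGraph n) ↔
      n = 3 ∧ Nonempty (G ≃* Multiplicative (ZMod 2 × ZMod 2)) := by
  constructor
  · rintro ⟨e⟩
    have hsq := sq_eq_one_of_propPowerCompl_iso_cycleGraph e
    have hcomplete := e.eq_top_iff.1 (propPowerCompl_eq_top_of_forall_sq_eq_one hsq)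
    obtain rfl : n = 3 := by
      by_contra hne
      exact cycleGraph_ne_top (by omega) hcomplete
    have := IsKleinFour.of_card_of_forall_sq_eq_one (card_eq_of_propPowerCompl_iso_cycleGraph e) hsq
    exact ⟨rfl, IsKleinFour.nonempty_mulEquiv⟩
  · rintro ⟨rfl, ⟨φ⟩⟩
    have hsq (g : G) : g ^ 2 = 1 :=
      φ.injective (by rw [map_pow, sq, IsKleinFour.mul_self, map_one])
    have hcard : Nat.card {g : G // g ≠ 1} = 3 := by
      have := Nat.card_subtype_ne_add_one (1 : G)
      have := (Nat.card_congr φ.toEquiv).trans IsKleinFour.card_four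
      omega
    rw [propPowerCompl_eq_top_of_forall_sq_eq_one hsq, cycleGraph_three_eq_top]
    exact ⟨Iso.completeGraph (Finite.equivFinOfCardEq hcard)⟩
end

section
/- Let G be a finite nontrivial group. The complement of the proper power graph of G does not contain K_{2,3} as a subgraph if and only if G is isomorphic to a cyclic group ℤ/p^nℤ for a prime p and n ≥ 1, to ℤ/2ℤ × ℤ/2ℤ, or to a cyclic group ℤ/2pℤ for an odd prime p. -/
open SimpleGraph

/-!
In a cyclic group two elements are adjacent iff their orders are incomparable for divisibility,
and there are `φ d` elements of each order `d ∣ |G|`. Hence a `K_{2,3}` appears as soon as `|G|`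
is divisible by two odd primes (elements of orders `q` and `r`), by `4q` (orders `4` against `q`,
`2q`) or by `2q²` (orders `2q` against `q²`). What remains is `|G| = p^n`, where there are no edges at all, and
`|G| = 2q`, where every edge contains the unique involution.

In a non-cyclic group, generators of distinct maximal cyclic subgroups are adjacent, and a
group is never the union of two proper subgroups. So two maximal cyclic subgroups of order `> 2`
give a `K_{2,3}`, and so does a single one `⟨m⟩` together with three involutions `t, tm, tm⁻¹`
outside it. Thus every element is an involution, any two distinct involutions are adjacent,
and five of them give a `K_{2,3}` unless `|G| = 4`.
-/

open Subgroup Finset Nat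

namespace Nat

theorem isPrimePow_or_eq_two_mul_prime {n : ℕ} (hn : 1 < n)
    (hodd : ∀ q r, q.Prime → r.Prime → q ≠ 2 → r ≠ 2 → q ∣ n → r ∣ n → q = r)
    (h4 : ∀ q, q.Prime → q ≠ 2 → q ∣ n → ¬ 4 ∣ n)
    (hsq : ∀ q, q.Prime → q ≠ 2 → 2 ∣ n → ¬ q ^ 2 ∣ n) :
    IsPrimePow n ∨ ∃ q, q.Prime ∧ q ≠ 2 ∧ n = 2 * q := by
  by_cases hpp : IsPrimePow n
  · exact Or.inl hpp
  right
  have hp := minFac_prime hn.ne'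
  have h2 : 2 ∣ n := by
    by_contra h2
    have ne_two : ∀ {p}, p ∣ n → p ≠ 2 := fun hpn hp2 => h2 (hp2 ▸ hpn)
    exact hpp (isPrimePow_iff_unique_prime_dvd.mpr ⟨n.minFac, ⟨hp, minFac_dvd n⟩,
      fun p ⟨hp', hpn⟩ => hodd _ _ hp' hp (ne_two hpn) (ne_two (minFac_dvd n)) hpn (minFac_dvd n)⟩)
  obtain ⟨q, hq, hqn, hq2⟩ : ∃ q, q.Prime ∧ q ∣ n ∧ q ≠ 2 := by
    by_contra! h
    exact hpp (isPrimePow_iff_unique_prime_dvd.mpr ⟨2, ⟨prime_two, h2⟩,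
      fun p ⟨hp', hpn⟩ => h p hp' hpn⟩)
  obtain ⟨m, rfl⟩ : 2 * q ∣ n :=
    ((coprime_primes prime_two hq).mpr hq2.symm).mul_dvd_of_dvd_of_dvd h2 hqn
  refine ⟨q, hq, hq2, ?_⟩
  by_contra hm
  have hm1 : m ≠ 1 := fun h => hm (by rw [h, mul_one])
  have hmn : m.minFac ∣ 2 * q * m := dvd_mul_of_dvd_right (minFac_dvd m) _
  -- the extra factor `m` contributes either another `2` or another `q`
  by_cases hm2 : m.minFac = 2
  · obtain ⟨k, hk⟩ := hm2 ▸ minFac_dvd m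
    exact h4 q hq hq2 hqn ⟨q * k, by rw [hk]; ring⟩
  · obtain ⟨k, hk⟩ := hodd _ _ (minFac_prime hm1) hq hm2 hq2 hmn hqn ▸ minFac_dvd m
    exact hsq q hq hq2 h2 ⟨2 * k, by rw [hk]; ring⟩

theorem eq_two_or_eq_two_of_dvd_two_mul_prime {q d e : ℕ} (hq : q.Prime) (hd : d ∣ 2 * q)
    (he : e ∣ 2 * q) (hde : ¬ d ∣ e) (hed : ¬ e ∣ d) : d = 2 ∨ e = 2 := by
  obtain ⟨d₁, d₂, hd₁, hd₂, rfl⟩ := Nat.dvd_mul.mp hd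
  obtain ⟨e₁, e₂, he₁, he₂, rfl⟩ := Nat.dvd_mul.mp he
  rcases (dvd_prime prime_two).mp hd₁ with rfl | rfl <;>
    rcases (dvd_prime prime_two).mp he₁ with rfl | rfl <;>
    rcases (dvd_prime hq).mp hd₂ with rfl | rfl <;>
    rcases (dvd_prime hq).mp he₂ with rfl | rfl <;>
    simp_all

end Nat

section Group

variable {G : Type*} [Group G]

theorem pow_eq_one_of_mem_zpowers {x m : G} {n : ℕ} (hx : x ∈ zpowers m) (hm : m ^ n = 1) :
    x ^ n = 1 :=
  orderOf_dvd_iff_pow_eq_one.mp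
    ((orderOf_dvd_of_mem_zpowers hx).trans (orderOf_dvd_of_pow_eq_one hm))

theorem eq_one_or_eq_of_mem_zpowers {t g : G} (ht : t ^ 2 = 1) (hg : g ∈ zpowers t) :
    g = 1 ∨ g = t := by
  obtain ⟨k, rfl⟩ := mem_zpowers_iff.mp hg
  obtain ⟨n, rfl | rfl⟩ := Int.even_or_odd' k
  · left
    rw [zpow_mul, zpow_ofNat, ht, one_zpow]
  · right
    rw [zpow_add, zpow_mul, zpow_ofNat, ht, one_zpow, one_mul, zpow_one]

theorem ne_inv_of_sq_ne_one {a : G} (ha : a ^ 2 ≠ 1) : a ≠ a⁻¹ :=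
  fun h => ha (by rw [sq]; exact eq_inv_iff_mul_eq_one.mp h)

theorem Subgroup.exists_notMem_of_ne_top_of_ne_top {H K : Subgroup G} (hH : H ≠ ⊤) (hK : K ≠ ⊤) :
    ∃ c, c ∉ H ∧ c ∉ K := by
  obtain ⟨a, ha⟩ := SetLike.exists_not_mem_of_ne_top H hH
  obtain ⟨b, hb⟩ := SetLike.exists_not_mem_of_ne_top K hK
  by_cases haK : a ∈ K
  · by_cases hbH : b ∈ H
    · exact ⟨a * b, fun h => ha ((H.mul_mem_cancel_right hbH).mp h),
        fun h => hb ((K.mul_mem_cancel_left haK).mp h)⟩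
    · exact ⟨b, hbH, hb⟩
  · exact ⟨a, ha, haK⟩

theorem IsCyclic.mem_zpowers_iff_orderOf_dvd_s16 [Finite G] [IsCyclic G] {x y : G} :
    x ∈ zpowers y ↔ orderOf x ∣ orderOf y := by
  classical
  cases nonempty_fintype G
  refine ⟨orderOf_dvd_of_mem_zpowers, fun h => ?_⟩
  -- `zpowers y` has `orderOf y` elements, and at most that many solve `a ^ orderOf y = 1`
  have hsub : (zpowers y : Set G).toFinset ⊆ ({a | a ^ orderOf y = 1} : Finset G) := fun a ha => by
    simpa using pow_eq_one_of_mem_zpowers (Set.mem_toFinset.mp ha) (pow_orderOf_eq_one y)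
  have heq := eq_of_subset_of_card_le hsub (by
    simpa [Set.toFinset_card, ← Nat.card_eq_fintype_card] using
      IsCyclic.card_pow_eq_one_le (α := G) (orderOf_pos y))
  have hx : x ∈ ({a | a ^ orderOf y = 1} : Finset G) :=
    mem_filter.mpr ⟨mem_univ x, orderOf_dvd_iff_pow_eq_one.mp h⟩
  simpa [← heq] using hx

theorem IsCyclic.eq_of_orderOf_eq_two [Finite G] [IsCyclic G] {x y : G} (hx : orderOf x = 2)
    (hy : orderOf y = 2) : x = y :=
  (eq_one_or_eq_of_mem_zpowers (hy ▸ pow_orderOf_eq_one y)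
    (IsCyclic.mem_zpowers_iff_orderOf_dvd_s16.mpr (hx.trans hy.symm).dvd)).resolve_left
    fun h => by simp [h] at hx

end Group

namespace PropPowerCompl

variable {G : Type*} [Group G]

def HasK23 (G : Type*) [Group G] : Prop :=
  ∃ u₁ u₂ w₁ w₂ w₃ : {g : G // g ≠ 1},
    u₁ ≠ u₂ ∧ w₁ ≠ w₂ ∧ w₁ ≠ w₃ ∧ w₂ ≠ w₃ ∧
    (propPowerCompl G).Adj u₁ w₁ ∧ (propPowerCompl G).Adj u₁ w₂ ∧
    (propPowerCompl G).Adj u₁ w₃ ∧ (propPowerCompl G).Adj u₂ w₁ ∧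
    (propPowerCompl G).Adj u₂ w₂ ∧ (propPowerCompl G).Adj u₂ w₃

def Incomparable (x y : G) : Prop := x ∉ zpowers y ∧ y ∉ zpowers x

namespace Incomparable

variable {x y : G}

lemma ne_one_left (h : Incomparable x y) : x ≠ 1 := fun hx => h.1 (hx ▸ one_mem _)

lemma ne_one_right (h : Incomparable x y) : y ≠ 1 := fun hy => h.2 (hy ▸ one_mem _)

lemma ne (h : Incomparable x y) : x ≠ y := fun hxy => h.1 (hxy ▸ mem_zpowers y)

end Incomparable

theorem hasK23_iff_exists_finset :
    HasK23 G ↔ ∃ U W : Finset G, 2 ≤ #U ∧ 3 ≤ #W ∧ ∀ u ∈ U, ∀ w ∈ W, Incomparable u w := by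
  classical
  constructor
  · rintro ⟨u₁, u₂, w₁, w₂, w₃, hu, h12, h13, h23, a11, a12, a13, a21, a22, a23⟩
    refine ⟨{u₁.1, u₂.1}, {w₁.1, w₂.1, w₃.1}, ?_, ?_, ?_⟩
    · rw [card_pair (Subtype.val_injective.ne hu)]
    · rw [card_eq_three.mpr ⟨_, _, _, Subtype.val_injective.ne h12,
        Subtype.val_injective.ne h13, Subtype.val_injective.ne h23, rfl⟩]
    · simp only [mem_insert, mem_singleton]
      rintro u (rfl | rfl) w (rfl | rfl | rfl)
      exacts [a11, a12, a13, a21, a22, a23]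
  · rintro ⟨U, W, hU, hW, h⟩
    obtain ⟨u₁, hu₁, u₂, hu₂, hu⟩ := one_lt_card.mp hU
    obtain ⟨w₁, hw₁, w₂, hw₂, w₃, hw₃, h12, h13, h23⟩ := two_lt_card.mp hW
    refine ⟨⟨u₁, (h u₁ hu₁ w₁ hw₁).ne_one_left⟩, ⟨u₂, (h u₂ hu₂ w₁ hw₁).ne_one_left⟩,
      ⟨w₁, (h u₁ hu₁ w₁ hw₁).ne_one_right⟩, ⟨w₂, (h u₁ hu₁ w₂ hw₂).ne_one_right⟩,
      ⟨w₃, (h u₁ hu₁ w₃ hw₃).ne_one_right⟩, by simpa, by simpa, by simpa, by simpa,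
      h _ hu₁ _ hw₁, h _ hu₁ _ hw₂, h _ hu₁ _ hw₃, h _ hu₂ _ hw₁, h _ hu₂ _ hw₂, h _ hu₂ _ hw₃⟩

theorem HasK23.six_le_card [Finite G] (h : HasK23 G) : 6 ≤ Nat.card G := by
  classical
  cases nonempty_fintype G
  obtain ⟨U, W, hU, hW, hUW⟩ := hasK23_iff_exists_finset.mp h
  obtain ⟨u₀, hu₀⟩ := card_pos.mp (by omega : 0 < #U)
  obtain ⟨w₀, hw₀⟩ := card_pos.mp (by omega : 0 < #W)
  have hdisj : Disjoint U W := disjoint_left.mpr fun u hu hw => (hUW u hu u hw).ne rfl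
  have hsub : U ∪ W ⊆ univ.erase 1 := by
    intro x hx
    rcases mem_union.mp hx with hx | hx
    · exact mem_erase.mpr ⟨(hUW x hx w₀ hw₀).ne_one_left, mem_univ x⟩
    · exact mem_erase.mpr ⟨(hUW u₀ hu₀ x hx).ne_one_right, mem_univ x⟩
  have := card_le_card hsub
  rw [card_union_of_disjoint hdisj, card_erase_of_mem (mem_univ 1), Finset.card_univ,
    ← Nat.card_eq_fintype_card] at this
  omega

theorem not_hasK23_of_incomparable_imp_eq (t : G)
    (ht : ∀ x y : G, Incomparable x y → x = t ∨ y = t) : ¬ HasK23 G := by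
  intro h
  obtain ⟨U, W, hU, hW, hUW⟩ := hasK23_iff_exists_finset.mp h
  obtain ⟨u, hu, hut⟩ := exists_mem_ne hU t
  have hWt : W ⊆ {t} := fun w hw =>
    mem_singleton.mpr ((ht u w (hUW u hu w hw)).resolve_left hut)
  have := card_le_card hWt
  rw [card_singleton] at this
  omega

theorem incomparable_of_sq_eq_one {s t : G} (hs : s ^ 2 = 1) (ht : t ^ 2 = 1) (hs1 : s ≠ 1)
    (ht1 : t ≠ 1) (hst : s ≠ t) : Incomparable s t :=
  ⟨fun h => (eq_one_or_eq_of_mem_zpowers ht h).elim hs1 hst,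
    fun h => (eq_one_or_eq_of_mem_zpowers hs h).elim ht1 hst.symm⟩

section Cyclic

variable [Finite G] [IsCyclic G]

theorem incomparable_iff_of_isCyclic {x y : G} :
    Incomparable x y ↔ ¬ orderOf x ∣ orderOf y ∧ ¬ orderOf y ∣ orderOf x := by
  simp only [Incomparable, IsCyclic.mem_zpowers_iff_orderOf_dvd_s16]

theorem hasK23_of_totient_le {d : ℕ} {E : Finset ℕ} (hd : d ∣ Nat.card G)
    (hE : ∀ e ∈ E, e ∣ Nat.card G) (hdE : ∀ e ∈ E, ¬ d ∣ e ∧ ¬ e ∣ d) (hφd : 2 ≤ φ d)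
    (hφE : 3 ≤ ∑ e ∈ E, φ e) : HasK23 G := by
  classical
  cases nonempty_fintype G
  have hcard : ∀ e, e ∣ Nat.card G → #{x : G | orderOf x = e} = φ e := fun e he =>
    IsCyclic.card_orderOf_eq_totient (by rwa [← Nat.card_eq_fintype_card])
  refine hasK23_iff_exists_finset.mpr ⟨({x | orderOf x = d} : Finset G),
    E.biUnion fun e => ({x | orderOf x = e} : Finset G), ?_, ?_, ?_⟩
  · rwa [hcard d hd]
  · rwa [card_biUnion, sum_congr rfl fun e he => hcard e (hE e he)]
    intro e _ e' _ hee'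
    exact disjoint_filter.mpr fun x _ hx hx' => hee' (hx.symm.trans hx')
  · intro u hu w hw
    simp only [mem_filter, mem_univ, true_and, mem_biUnion] at hu hw
    obtain ⟨e, he, hw⟩ := hw
    rw [incomparable_iff_of_isCyclic, hu, hw]
    exact hdE e he

theorem hasK23_of_prime_dvd_of_prime_dvd {q r : ℕ} (hq : q.Prime) (hr : r.Prime) (hq2 : 2 < q)
    (hr3 : 3 < r) (hqr : q ≠ r) (hqG : q ∣ Nat.card G) (hrG : r ∣ Nat.card G) : HasK23 G :=
  hasK23_of_totient_le (E := {r}) hqG (by simpa using hrG)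
    (by simpa using ⟨fun h => hqr ((prime_dvd_prime_iff_eq hq hr).mp h),
      fun h => hqr ((prime_dvd_prime_iff_eq hr hq).mp h).symm⟩)
    (by rw [totient_prime hq]; omega) (by rw [sum_singleton, totient_prime hr]; omega)

theorem hasK23_of_four_dvd {q : ℕ} (hq : q.Prime) (hq2 : q ≠ 2) (h4 : 4 ∣ Nat.card G)
    (hqG : q ∣ Nat.card G) : HasK23 G := by
  have hq1 : q % 2 = 1 := odd_iff.mp (hq.odd_of_ne_two hq2)
  have hq3 : 3 ≤ q := by have := hq.two_le; omega
  have hcop : Coprime 2 q := (coprime_primes prime_two hq).mpr hq2.symm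
  have h2qG : 2 * q ∣ Nat.card G := hcop.mul_dvd_of_dvd_of_dvd ((by norm_num : 2 ∣ 4).trans h4) hqG
  refine hasK23_of_totient_le (E := {q, 2 * q}) h4 (by simp [hqG, h2qG]) ?_ (by decide) ?_
  · simp only [mem_insert, mem_singleton]
    rintro e (rfl | rfl)
    · refine ⟨by omega, fun h => ?_⟩
      have := le_of_dvd (by norm_num) h
      interval_cases e <;> omega
    · exact ⟨by omega, fun h => by have := le_of_dvd (by norm_num) h; omega⟩
  · rw [sum_pair (by omega), totient_mul hcop, totient_two, totient_prime hq]
    omega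

theorem hasK23_of_two_dvd_of_sq_dvd {q : ℕ} (hq : q.Prime) (hq2 : q ≠ 2) (h2 : 2 ∣ Nat.card G)
    (hqG : q ^ 2 ∣ Nat.card G) : HasK23 G := by
  have hq1 : q % 2 = 1 := odd_iff.mp (hq.odd_of_ne_two hq2)
  have hq3 : 3 ≤ q := by have := hq.two_le; omega
  have hcop : Coprime 2 q := (coprime_primes prime_two hq).mpr hq2.symm
  have h2qG : 2 * q ∣ Nat.card G :=
    hcop.mul_dvd_of_dvd_of_dvd h2 ((dvd_pow_self q two_ne_zero).trans hqG)
  refine hasK23_of_totient_le (E := {q ^ 2}) h2qG (by simpa using hqG) ?_ ?_ ?_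
  · simp only [mem_singleton, forall_eq]
    refine ⟨fun h => ?_, fun h => ?_⟩
    · have := prime_two.dvd_of_dvd_pow ((dvd_mul_right 2 q).trans h)
      omega
    · have : q ∣ 2 := Nat.dvd_of_mul_dvd_mul_left hq.pos (by rwa [← sq, mul_comm])
      have := le_of_dvd two_pos this
      omega
  · rw [totient_mul hcop, totient_two, totient_prime hq]
    omega
  · rw [sum_singleton, totient_prime_pow hq two_pos]
    norm_num
    exact hq3.trans (Nat.le_mul_of_pos_right q (by omega))

theorem isPrimePow_or_eq_two_mul_prime_of_not_hasK23 [Nontrivial G] (h : ¬ HasK23 G) :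
    IsPrimePow (Nat.card G) ∨ ∃ q, q.Prime ∧ q ≠ 2 ∧ Nat.card G = 2 * q := by
  refine isPrimePow_or_eq_two_mul_prime Finite.one_lt_card ?_
    (fun q hq hq2 hqG h4 => h (hasK23_of_four_dvd hq hq2 h4 hqG))
    (fun q hq hq2 h2 hqG => h (hasK23_of_two_dvd_of_sq_dvd hq hq2 h2 hqG))
  intro q r hq hr hq2 hr2 hqG hrG
  by_contra hqr
  have := hq.two_le
  have := hr.two_le
  rcases eq_or_ne r 3 with rfl | hr3
  · exact h (hasK23_of_prime_dvd_of_prime_dvd hr hq (by omega) (by omega) (Ne.symm hqr) hrG hqG)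
  · exact h (hasK23_of_prime_dvd_of_prime_dvd hq hr (by omega) (by omega) hqr hqG hrG)

theorem not_incomparable_of_card_eq_prime_pow {p n : ℕ} (hp : p.Prime)
    (hcard : Nat.card G = p ^ n) (x y : G) : ¬ Incomparable x y := by
  rw [incomparable_iff_of_isCyclic, not_and_or, not_not, not_not]
  obtain ⟨i, -, hi⟩ := (dvd_prime_pow hp).mp (hcard ▸ orderOf_dvd_natCard x)
  obtain ⟨j, -, hj⟩ := (dvd_prime_pow hp).mp (hcard ▸ orderOf_dvd_natCard y)
  rw [hi, hj]
  exact (le_total i j).imp (pow_dvd_pow p) (pow_dvd_pow p)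

theorem incomparable_imp_eq_of_card_eq_two_mul_prime {q : ℕ} (hq : q.Prime)
    (hcard : Nat.card G = 2 * q) {t : G} (ht : orderOf t = 2) {x y : G}
    (hxy : Incomparable x y) : x = t ∨ y = t := by
  rw [incomparable_iff_of_isCyclic] at hxy
  exact (eq_two_or_eq_two_of_dvd_two_mul_prime hq (hcard ▸ orderOf_dvd_natCard x)
    (hcard ▸ orderOf_dvd_natCard y) hxy.1 hxy.2).imp
    (IsCyclic.eq_of_orderOf_eq_two · ht) (IsCyclic.eq_of_orderOf_eq_two · ht)

end Cyclic

theorem zpowers_ne_top_of_not_isCyclic (hnc : ¬ IsCyclic G) (a : G) : zpowers a ≠ ⊤ :=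
  fun h => hnc (isCyclic_iff_exists_zpowers_eq_top.mpr ⟨a, h⟩)

def IsMaxCyclicGen (m : G) : Prop := Maximal (· ∈ Set.range (zpowers (G := G))) (zpowers m)

theorem exists_isMaxCyclicGen [Finite G] (x : G) : ∃ m, x ∈ zpowers m ∧ IsMaxCyclicGen m := by
  obtain ⟨_, hle, hmax⟩ := Finite.exists_le_maximal (Set.mem_range_self (f := zpowers) x)
  obtain ⟨m, rfl⟩ := hmax.prop
  exact ⟨m, hle (mem_zpowers x), hmax⟩

theorem IsMaxCyclicGen.inv {m : G} (hm : IsMaxCyclicGen m) : IsMaxCyclicGen m⁻¹ := by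
  rwa [IsMaxCyclicGen, zpowers_inv]

theorem IsMaxCyclicGen.incomparable {a b : G} (ha : IsMaxCyclicGen a) (hb : IsMaxCyclicGen b)
    (hab : zpowers a ≠ zpowers b) : Incomparable a b :=
  ⟨fun h => hab (ha.eq_of_le hb.prop (zpowers_le.mpr h)),
    fun h => hab (hb.eq_of_le ha.prop (zpowers_le.mpr h)).symm⟩

section NonCyclic

variable [Finite G]

theorem hasK23_of_isMaxCyclicGen (hnc : ¬ IsCyclic G) {a b : G} (ha : IsMaxCyclicGen a)
    (hb : IsMaxCyclicGen b) (hab : zpowers a ≠ zpowers b) (ha2 : a ^ 2 ≠ 1) (hb2 : b ^ 2 ≠ 1) :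
    HasK23 G := by
  classical
  obtain ⟨c, hca, hcb⟩ := exists_notMem_of_ne_top_of_ne_top
    (zpowers_ne_top_of_not_isCyclic hnc a) (zpowers_ne_top_of_not_isCyclic hnc b)
  obtain ⟨m, hcm, hm⟩ := exists_isMaxCyclicGen c
  have hma : zpowers m ≠ zpowers a := fun h => hca (h ▸ hcm)
  have hmb : zpowers m ≠ zpowers b := fun h => hcb (h ▸ hcm)
  have hU : ∀ u ∈ ({a, a⁻¹} : Finset G), IsMaxCyclicGen u ∧ zpowers u = zpowers a := by
    simp [ha, ha.inv]
  have hW : ∀ w ∈ ({b, b⁻¹, m} : Finset G), IsMaxCyclicGen w ∧ zpowers w ≠ zpowers a := by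
    simp [hb, hb.inv, hm, hab.symm, hma]
  refine hasK23_iff_exists_finset.mpr ⟨{a, a⁻¹}, {b, b⁻¹, m}, ?_, ?_, fun u hu w hw => ?_⟩
  · rw [card_pair (ne_inv_of_sq_ne_one ha2)]
  · rw [card_eq_three.mpr ⟨b, b⁻¹, m, ne_inv_of_sq_ne_one hb2, fun h => hmb (h ▸ rfl),
      fun h => hmb (by rw [← h, zpowers_inv]), rfl⟩]
  · exact (hU u hu).1.incomparable (hW w hw).1 ((hU u hu).2 ▸ (hW w hw).2.symm)

theorem sq_eq_one_of_not_hasK23 (hnc : ¬ IsCyclic G) (h : ¬ HasK23 G) (x : G) : x ^ 2 = 1 := by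
  classical
  by_contra hx
  obtain ⟨m, hxm, hm⟩ := exists_isMaxCyclicGen x
  have hm2 : m ^ 2 ≠ 1 := fun hm2 => hx (pow_eq_one_of_mem_zpowers hxm hm2)
  have hout : ∀ s ∉ zpowers m, s ^ 2 = 1 := by
    intro s hs
    by_contra hs2
    obtain ⟨m', hsm', hm'⟩ := exists_isMaxCyclicGen s
    exact h (hasK23_of_isMaxCyclicGen hnc hm' hm (fun he => hs (he ▸ hsm'))
      (fun h2 => hs2 (pow_eq_one_of_mem_zpowers hsm' h2)) hm2)
  obtain ⟨t, ht⟩ := SetLike.exists_not_mem_of_ne_top _ (zpowers_ne_top_of_not_isCyclic hnc m)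
  have hm1 : m ≠ 1 := fun h => hm2 (by rw [h, one_pow])
  have hU : ∀ g ∈ ({m, m⁻¹} : Finset G), g ∈ zpowers m ∧ g ≠ 1 := by
    simp [mem_zpowers, hm1]
  have hW : ∀ s ∈ ({t, t * m, t * m⁻¹} : Finset G), s ∉ zpowers m := by
    simp [mul_mem_cancel_right, ht, mem_zpowers]
  refine h (hasK23_iff_exists_finset.mpr
    ⟨{m, m⁻¹}, {t, t * m, t * m⁻¹}, ?_, ?_, fun g hg s hs => ?_⟩)
  · rw [card_pair (ne_inv_of_sq_ne_one hm2)]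
  · rw [card_eq_three.mpr ⟨t, t * m, t * m⁻¹, by simpa using hm1, by simpa using hm1,
      by simpa using ne_inv_of_sq_ne_one hm2, rfl⟩]
  · obtain ⟨hgm, hg1⟩ := hU g hg
    have hsm := hW s hs
    exact ⟨fun hgs => (eq_one_or_eq_of_mem_zpowers (hout s hsm) hgs).elim hg1
        fun hgs => hsm (hgs ▸ hgm),
      fun hsg => hsm (zpowers_le.mpr hgm hsg)⟩

theorem hasK23_of_sq_eq_one (hsq : ∀ x : G, x ^ 2 = 1) (hcard : 6 ≤ Nat.card G) : HasK23 G := by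
  classical
  cases nonempty_fintype G
  have hS : 5 ≤ #(univ.erase (1 : G)) := by
    rw [card_erase_of_mem (mem_univ 1), Finset.card_univ, ← Nat.card_eq_fintype_card]
    omega
  obtain ⟨U, hUS, hU⟩ := exists_subset_card_eq (show 2 ≤ #(univ.erase (1 : G)) by omega)
  refine hasK23_iff_exists_finset.mpr
    ⟨U, univ.erase 1 \ U, hU.ge, by rw [card_sdiff_of_subset hUS]; omega, fun u hu w hw => ?_⟩
  obtain ⟨hw, hwU⟩ := mem_sdiff.mp hw
  exact incomparable_of_sq_eq_one (hsq u) (hsq w) (ne_of_mem_erase (hUS hu))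
    (ne_of_mem_erase hw) fun h => hwU (h ▸ hu)

theorem isKleinFour_of_not_hasK23 [Nontrivial G] (hnc : ¬ IsCyclic G) (h : ¬ HasK23 G) :
    IsKleinFour G := by
  have hsq := sq_eq_one_of_not_hasK23 hnc h
  have hlt : Nat.card G < 6 := not_le.mp fun h6 => h (hasK23_of_sq_eq_one hsq h6)
  have hprime : ∀ p, p.Prime → Nat.card G ≠ p := fun p hp hG =>
    hnc (haveI : Fact p.Prime := ⟨hp⟩; isCyclic_of_prime_card hG)
  have := hprime 2 prime_two
  have := hprime 3 prime_three
  have := hprime 5 prime_five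
  have := Finite.one_lt_card (α := G)
  exact ⟨by omega,
    (Monoid.exponent_eq_prime_iff prime_two).mpr fun g hg => orderOf_eq_prime (hsq g) hg⟩

end NonCyclic

theorem nonempty_mulEquiv_multiplicative_zmod_iff {n : ℕ} :
    Nonempty (G ≃* Multiplicative (ZMod n)) ↔ IsCyclic G ∧ Nat.card G = n := by
  constructor
  · rintro ⟨e⟩
    exact ⟨isCyclic_of_surjective e.symm.toMonoidHom e.symm.surjective,
      (Nat.card_congr e.toEquiv).trans
        ((Nat.card_congr Multiplicative.toAdd).trans (card_zmod n))⟩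
  · rintro ⟨hc, rfl⟩
    exact ⟨(zmodCyclicMulEquiv hc).symm⟩

end PropPowerCompl

open PropPowerCompl

/-- For a finite nontrivial group `G`, the complement of the proper power graph of
`G` contains no `K_{2,3}` subgraph iff `G ≅ ℤ/p^nℤ` (`p` prime, `n ≥ 1`),
`G ≅ ℤ/2ℤ × ℤ/2ℤ`, or `G ≅ ℤ/2pℤ` for an odd prime `p`. -/
theorem propPowerCompl_no_K23_iff (G : Type*) [Group G] [Finite G] [Nontrivial G] :
    (¬ ∃ u₁ u₂ w₁ w₂ w₃ : {g : G // g ≠ 1},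
        u₁ ≠ u₂ ∧ w₁ ≠ w₂ ∧ w₁ ≠ w₃ ∧ w₂ ≠ w₃ ∧
        (propPowerCompl G).Adj u₁ w₁ ∧ (propPowerCompl G).Adj u₁ w₂ ∧
        (propPowerCompl G).Adj u₁ w₃ ∧ (propPowerCompl G).Adj u₂ w₁ ∧
        (propPowerCompl G).Adj u₂ w₂ ∧ (propPowerCompl G).Adj u₂ w₃) ↔
      ((∃ p n : ℕ, p.Prime ∧ 1 ≤ n ∧ Nonempty (G ≃* Multiplicative (ZMod (p ^ n)))) ∨
        Nonempty (G ≃* Multiplicative (ZMod 2 × ZMod 2)) ∨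
        (∃ p : ℕ, p.Prime ∧ p ≠ 2 ∧ Nonempty (G ≃* Multiplicative (ZMod (2 * p))))) := by
  change ¬ HasK23 G ↔ _
  simp only [nonempty_mulEquiv_multiplicative_zmod_iff]
  constructor
  · intro h
    by_cases hc : IsCyclic G
    · rcases isPrimePow_or_eq_two_mul_prime_of_not_hasK23 h with hpp | ⟨q, hq, hq2, hcard⟩
      · obtain ⟨p, n, hp, hn, hpn⟩ := (isPrimePow_nat_iff _).mp hpp
        exact Or.inl ⟨p, n, hp, hn, hc, hpn.symm⟩
      · exact Or.inr (Or.inr ⟨q, hq, hq2, hc, hcard⟩)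
    · have := isKleinFour_of_not_hasK23 hc h
      exact Or.inr (Or.inl IsKleinFour.nonempty_mulEquiv)
  · rintro (⟨p, n, hp, -, hc, hcard⟩ | he | ⟨q, hq, -, hc, hcard⟩)
    · exact not_hasK23_of_incomparable_imp_eq 1 fun x y hxy =>
        absurd hxy (not_incomparable_of_card_eq_prime_pow hp hcard x y)
    · obtain ⟨e⟩ := he
      intro h
      have := h.six_le_card
      rw [Nat.card_congr e.toEquiv, IsKleinFour.card_four] at this
      omega
    · obtain ⟨t, ht⟩ := exists_prime_orderOf_dvd_card' (G := G) 2 (hcard ▸ dvd_mul_right 2 q)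
      exact not_hasK23_of_incomparable_imp_eq t fun x y =>
        incomparable_imp_eq_of_card_eq_two_mul_prime hq hcard ht
end

section
/- Let G be a finite group whose order has at least three distinct prime divisors. Then the complement of the proper power graph of G contains the complete bipartite graph K_{3,3} as a subgraph; that is, there exist six distinct non-identity elements u_1, u_2, u_3, w_1, w_2, w_3 of G such that each u_i is adjacent to each w_j in the complement of the proper power graph. -/
/-! Elements of coprime orders are never powers of one another. Sort the primes as
`p < q < r` and pick elements `a, b, c` of orders `p, q, r` (Cauchy). Then `q > 2` and
`r > 3`, so `a, b, b²` and `c, c², c³` are six distinct non-identity elements; the orders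
of the first three divide `p * q` and those of the last three divide `r`. -/

open SimpleGraph

open Function

def SimpleGraph.HasK33 {V : Type*} (Γ : SimpleGraph V) : Prop :=
  ∃ u₁ u₂ u₃ w₁ w₂ w₃ : V,
    u₁ ≠ u₂ ∧ u₁ ≠ u₃ ∧ u₂ ≠ u₃ ∧ w₁ ≠ w₂ ∧ w₁ ≠ w₃ ∧ w₂ ≠ w₃ ∧
    u₁ ≠ w₁ ∧ u₁ ≠ w₂ ∧ u₁ ≠ w₃ ∧ u₂ ≠ w₁ ∧ u₂ ≠ w₂ ∧ u₂ ≠ w₃ ∧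
    u₃ ≠ w₁ ∧ u₃ ≠ w₂ ∧ u₃ ≠ w₃ ∧
    Γ.Adj u₁ w₁ ∧ Γ.Adj u₁ w₂ ∧ Γ.Adj u₁ w₃ ∧ Γ.Adj u₂ w₁ ∧ Γ.Adj u₂ w₂ ∧
    Γ.Adj u₂ w₃ ∧ Γ.Adj u₃ w₁ ∧ Γ.Adj u₃ w₂ ∧ Γ.Adj u₃ w₃

theorem SimpleGraph.HasK33.of_forall_adj {V : Type*} {Γ : SimpleGraph V}
    {u w : Fin 3 → V} (hu : Injective u) (hw : Injective w)
    (hadj : ∀ i j, Γ.Adj (u i) (w j)) : Γ.HasK33 :=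
  ⟨u 0, u 1, u 2, w 0, w 1, w 2, hu.ne (by decide), hu.ne (by decide), hu.ne (by decide),
    hw.ne (by decide), hw.ne (by decide), hw.ne (by decide),
    (hadj 0 0).ne, (hadj 0 1).ne, (hadj 0 2).ne, (hadj 1 0).ne, (hadj 1 1).ne, (hadj 1 2).ne,
    (hadj 2 0).ne, (hadj 2 1).ne, (hadj 2 2).ne,
    hadj 0 0, hadj 0 1, hadj 0 2, hadj 1 0, hadj 1 1, hadj 1 2, hadj 2 0, hadj 2 1, hadj 2 2⟩

section

variable {G : Type*} [Group G]

theorem notMem_zpowers_of_coprime_orderOf {x y : G} (hx : x ≠ 1)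
    (h : (orderOf x).Coprime (orderOf y)) : x ∉ Subgroup.zpowers y := fun hxy =>
  hx <| orderOf_eq_one_iff.1 <| h.eq_one_of_dvd (orderOf_dvd_of_mem_zpowers hxy)

theorem propPowerCompl_adj_of_coprime {x y : {g : G // g ≠ 1}}
    (h : (orderOf (x : G)).Coprime (orderOf (y : G))) : (propPowerCompl G).Adj x y :=
  ⟨notMem_zpowers_of_coprime_orderOf x.2 h, notMem_zpowers_of_coprime_orderOf y.2 h.symm⟩

theorem injective_fin_pow_succ {x : G} {n : ℕ} (h : n < orderOf x) :
    Injective fun i : Fin n => x ^ (i.val + 1) := fun i j hij =>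
  Fin.ext <| Nat.succ_injective <| pow_injOn_Iio_orderOf
    (Set.mem_Iio.2 (by omega)) (Set.mem_Iio.2 (by omega)) hij

theorem propPowerCompl_hasK33_of_coprime {u w : Fin 3 → G}
    (hu : Injective u) (hw : Injective w) (hu₁ : ∀ i, u i ≠ 1) (hw₁ : ∀ j, w j ≠ 1)
    {m n : ℕ} (hmn : m.Coprime n) (hum : ∀ i, orderOf (u i) ∣ m)
    (hwn : ∀ j, orderOf (w j) ∣ n) : (propPowerCompl G).HasK33 :=
  HasK33.of_forall_adj (u := fun i => ⟨u i, hu₁ i⟩) (w := fun j => ⟨w j, hw₁ j⟩)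
    (fun _ _ h => hu (congrArg Subtype.val h))
    (fun _ _ h => hw (congrArg Subtype.val h))
    fun i j => propPowerCompl_adj_of_coprime <|
      (hmn.coprime_dvd_left (hum i)).coprime_dvd_right (hwn j)

theorem propPowerCompl_hasK33_of_orderOf {a b c : G} (ha : a ≠ 1)
    (hab : (orderOf a).Coprime (orderOf b)) (habc : (orderOf a * orderOf b).Coprime (orderOf c))
    (hb : 2 < orderOf b) (hc : 3 < orderOf c) : (propPowerCompl G).HasK33 := by
  have ha_notMem : a ∉ Set.range fun i : Fin 2 => b ^ (i.val + 1) := by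
    rintro ⟨i, hi⟩
    exact notMem_zpowers_of_coprime_orderOf ha hab (hi ▸ Subgroup.npow_mem_zpowers b _)
  refine propPowerCompl_hasK33_of_coprime
    (Fin.cons_injective_of_injective ha_notMem (injective_fin_pow_succ hb))
    (injective_fin_pow_succ hc) (Fin.cases ha fun i => ?_)
    (fun j => pow_ne_one_of_lt_orderOf j.val.succ_ne_zero (by omega)) habc
    (Fin.cases (dvd_mul_right _ _) fun i => ?_) (fun j => orderOf_pow_dvd _)
  · exact pow_ne_one_of_lt_orderOf i.val.succ_ne_zero (by omega)
  · exact (orderOf_pow_dvd _).trans (dvd_mul_left _ _)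

end

/-- If the order of a finite group `G` has at least three distinct prime divisors,
then the complement of the proper power graph of `G` contains `K_{3,3}` as a
subgraph: there are six distinct non-identity elements `u₁, u₂, u₃, w₁, w₂, w₃` with
each `uᵢ` adjacent to each `wⱼ`. -/
theorem propPowerCompl_contains_K33 (G : Type*) [Group G] [Finite G]
    (p q r : ℕ) (hp : p.Prime) (hq : q.Prime) (hr : r.Prime)
    (hpq : p ≠ q) (hpr : p ≠ r) (hqr : q ≠ r)
    (hpd : p ∣ Nat.card G) (hqd : q ∣ Nat.card G) (hrd : r ∣ Nat.card G) :
    ∃ u₁ u₂ u₃ w₁ w₂ w₃ : {g : G // g ≠ 1},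
      u₁ ≠ u₂ ∧ u₁ ≠ u₃ ∧ u₂ ≠ u₃ ∧ w₁ ≠ w₂ ∧ w₁ ≠ w₃ ∧ w₂ ≠ w₃ ∧
      u₁ ≠ w₁ ∧ u₁ ≠ w₂ ∧ u₁ ≠ w₃ ∧ u₂ ≠ w₁ ∧ u₂ ≠ w₂ ∧ u₂ ≠ w₃ ∧
      u₃ ≠ w₁ ∧ u₃ ≠ w₂ ∧ u₃ ≠ w₃ ∧
      (propPowerCompl G).Adj u₁ w₁ ∧ (propPowerCompl G).Adj u₁ w₂ ∧
      (propPowerCompl G).Adj u₁ w₃ ∧ (propPowerCompl G).Adj u₂ w₁ ∧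
      (propPowerCompl G).Adj u₂ w₂ ∧ (propPowerCompl G).Adj u₂ w₃ ∧
      (propPowerCompl G).Adj u₃ w₁ ∧ (propPowerCompl G).Adj u₃ w₂ ∧
      (propPowerCompl G).Adj u₃ w₃ := by
  wlog hpq' : p < q generalizing p q
  · apply this (p := q) (q := p) <;> first | assumption | omega
  wlog hqr' : q < r generalizing p q r
  · rcases hpr.lt_or_gt with hpr' | hrp'
    · apply this (p := p) (q := r) (r := q) <;> first | assumption | omega
    · apply this (p := r) (q := p) (r := q) <;> first | assumption | omega
  have := Fact.mk hp
  have := Fact.mk hq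
  have := Fact.mk hr
  obtain ⟨a, ha⟩ := exists_prime_orderOf_dvd_card' p hpd
  obtain ⟨b, hb⟩ := exists_prime_orderOf_dvd_card' q hqd
  obtain ⟨c, hc⟩ := exists_prime_orderOf_dvd_card' r hrd
  have coprime {s t : ℕ} (hs : s.Prime) (ht : t.Prime) (hst : s ≠ t) : s.Coprime t :=
    (Nat.coprime_primes hs ht).2 hst
  refine propPowerCompl_hasK33_of_orderOf (a := a) (b := b) (c := c) ?_ ?_ ?_ ?_ ?_
  · rintro rfl
    exact hp.ne_one (ha ▸ orderOf_one)
  · rw [ha, hb]; exact coprime hp hq hpq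
  · rw [ha, hb, hc]; exact Nat.Coprime.mul_left (coprime hp hr hpr) (coprime hq hr hqr)
  · rw [hb]; have := hp.two_le; omega
  · rw [hc]; have := hp.two_le; omega
end
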